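/- arXiv:2503.18044 — 2 statements merged into one kernel-verified Lean document; each statement's English description precedes it below -/
import Mathlib

section
/- Let G = K_1 ∨ (C_{l_1} ∪ ... ∪ C_{l_t} ∪ s K_1) with s, t ≥ 1 and n vertices, and let r be a root of x^3 − (n+5)x^2 + 5nx − 4(n−s−1) with r ∉ {1, 5}. Then the vector taking value 1/(r−1) on each of the s isolated-part vertices, 1/(r−5) on each cycle vertex, and 1 on the join vertex is an eigenvector of Q(G) for the eigenvalue r. -/
open SimpleGraph Matrix Finset
attribute [local instance] Classical.propDecidable
set_option linter.unnecessarySimpa false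

/-- The signless Laplacian matrix `Q(G) = D(G) + A(G)`. -/
noncomputable def signlessLaplacian {V : Type*} [Fintype V] (G : SimpleGraph V) :
    Matrix V V ℝ :=
  Matrix.diagonal (fun v => (G.degree v : ℝ)) + G.adjMatrix ℝ

/-- The multiset of eigenvalues of a Hermitian real matrix. -/
noncomputable def eigMultiset {V : Type*} [Fintype V] [DecidableEq V]
    {M : Matrix V V ℝ} (hM : M.IsHermitian) : Multiset ℝ :=
  Finset.univ.val.map hM.eigenvalues

/-- The `i`-th largest eigenvalue (0-indexed) of a Hermitian real matrix. -/
noncomputable def ithEig {V : Type*} [Fintype V] [DecidableEq V]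
    {M : Matrix V V ℝ} (hM : M.IsHermitian) (i : ℕ) : ℝ :=
  ((eigMultiset hM).sort (· ≥ ·)).getD i 0

/-- The join `G ∨ H` of two graphs. -/
def joinG {α β : Type*} (G : SimpleGraph α) (H : SimpleGraph β) : SimpleGraph (α ⊕ β) where
  Adj x y :=
    match x, y with
    | Sum.inl a, Sum.inl b => G.Adj a b
    | Sum.inr a, Sum.inr b => H.Adj a b
    | Sum.inl _, Sum.inr _ => True
    | Sum.inr _, Sum.inl _ => True
  symm := by
    constructor
    rintro (a | a) (b | b) h <;> simp_all <;> exact h.symm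
  loopless := by constructor; rintro (a | a) h <;> simp_all

/-- The disjoint union `G ∪ H` of two graphs. -/
def sumG {α β : Type*} (G : SimpleGraph α) (H : SimpleGraph β) : SimpleGraph (α ⊕ β) where
  Adj x y :=
    match x, y with
    | Sum.inl a, Sum.inl b => G.Adj a b
    | Sum.inr a, Sum.inr b => H.Adj a b
    | _, _ => False
  symm := by
    constructor
    rintro (a | a) (b | b) h <;> simp_all <;> exact h.symm
  loopless := by constructor; rintro (a | a) h <;> simp_all

/-- The disjoint union of cycles `C_{l 0} ∪ ⋯ ∪ C_{l (t-1)}`. -/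
def cyclesUnion (t : ℕ) (l : Fin t → ℕ) : SimpleGraph (Σ i : Fin t, Fin (l i)) where
  Adj x y := ∃ h : x.1 = y.1, (cycleGraph (l y.1)).Adj (h ▸ x.2) y.2
  symm := by
    constructor
    rintro ⟨i, a⟩ ⟨j, b⟩ ⟨h, hadj⟩
    dsimp only at h hadj ⊢
    subst h
    exact ⟨rfl, hadj.symm⟩
  loopless := by
    constructor
    rintro ⟨i, a⟩ ⟨h, hadj⟩
    dsimp only at h hadj
    rw [eq_self_iff_true] at h
    exact (cycleGraph (l i)).loopless.irrefl a (by simpa using hadj)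

/-! Since `(Q f) v = ∑_{u ~ v} (f v + f u)`, the eigenvalue equation can be checked vertex by
vertex. At an isolated-part vertex (only neighbour: the join vertex) it reads
`1/(r-1) + 1 = r/(r-1)`; at a cycle vertex (the join vertex and two cycle neighbours)
`1/(r-5) + 1 + 4/(r-5) = r/(r-5)`; at the join vertex, adjacent to the `n - s - 1` cycle vertices
and the `s` isolated-part vertices, `(n-s-1)(1 + 1/(r-5)) + s(1 + 1/(r-1)) = r`, which after
clearing denominators is exactly the cubic satisfied by `r`. -/

lemma signlessLaplacian_mulVec_apply {V : Type*} [Fintype V] (G : SimpleGraph V) (f : V → ℝ)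
    (v : V) : (signlessLaplacian G *ᵥ f) v = ∑ u ∈ G.neighborFinset v, (f v + f u) := by
  rw [signlessLaplacian, add_mulVec, Pi.add_apply, mulVec_diagonal, adjMatrix_mulVec_apply,
    Finset.sum_add_distrib, Finset.sum_const, nsmul_eq_mul, card_neighborFinset_eq_degree]

lemma cycleGraph_degree_of_three_le {m : ℕ} (hm : 3 ≤ m) (a : Fin m) :
    (cycleGraph m).degree a = 2 := by
  obtain ⟨k, rfl⟩ : ∃ k, m = k + 3 := ⟨m - 3, by omega⟩
  exact cycleGraph_degree_three_le

lemma cyclesUnion_neighborFinset (t : ℕ) (l : Fin t → ℕ) (i : Fin t) (a : Fin (l i)) :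
    (cyclesUnion t l).neighborFinset ⟨i, a⟩ =
      ((cycleGraph (l i)).neighborFinset a).map (Function.Embedding.sigmaMk i) := by
  ext ⟨j, b⟩
  simp only [mem_neighborFinset, Finset.mem_map, Function.Embedding.sigmaMk_apply]
  constructor
  · rintro ⟨h, hab⟩
    dsimp only at h hab
    subst h
    exact ⟨b, hab, rfl⟩
  · rintro ⟨c, hc, h⟩
    cases h
    exact ⟨rfl, hc⟩

lemma cyclesUnion_degree {t : ℕ} {l : Fin t → ℕ} {i : Fin t} (hl : 3 ≤ l i) (a : Fin (l i)) :
    (cyclesUnion t l).degree ⟨i, a⟩ = 2 := by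
  rw [← card_neighborFinset_eq_degree, cyclesUnion_neighborFinset, Finset.card_map,
    card_neighborFinset_eq_degree, cycleGraph_degree_of_three_le hl]

theorem root_eigenvector_general (t s n : ℕ)
    (l : Fin t → ℕ) (hl : ∀ i, 3 ≤ l i) (hn : n = 1 + (∑ i, l i) + s)
    (r : ℝ) (hr1 : r ≠ 1) (hr5 : r ≠ 5)
    (hroot : r ^ 3 - (n + 5) * r ^ 2 + 5 * n * r - 4 * ((n : ℝ) - s - 1) = 0) :
    (signlessLaplacian (joinG (⊥ : SimpleGraph Unit)
        (sumG (cyclesUnion t l) (⊥ : SimpleGraph (Fin s))))).mulVec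
      (Sum.elim (fun _ => 1)
        (Sum.elim (fun _ => 1 / (r - 5)) (fun _ => 1 / (r - 1)))) =
    r • (Sum.elim (fun _ => (1 : ℝ))
        (Sum.elim (fun _ => 1 / (r - 5)) (fun _ => 1 / (r - 1)))) := by
  have h1 : r - 1 ≠ 0 := sub_ne_zero.mpr hr1
  have h5 : r - 5 ≠ 0 := sub_ne_zero.mpr hr5
  ext (⟨⟩ | ⟨i, a⟩ | b) <;>
    simp only [signlessLaplacian_mulVec_apply, neighborFinset_eq_filter, Finset.sum_filter,
      Fintype.sum_sum_type, joinG, sumG, bot_adj, Sum.elim_inl, Sum.elim_inr, if_true, if_false,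
      Finset.sum_const_zero, Finset.sum_const, Finset.card_univ, Fintype.card_unit,
      Fintype.card_sigma, Fintype.card_fin, nsmul_eq_mul, zero_add, add_zero, Pi.smul_apply,
      smul_eq_mul]
  · have hcycles : ((∑ i, l i : ℕ) : ℝ) = n - s - 1 := by rw [hn]; push_cast; ring
    rw [hcycles]
    field_simp
    linear_combination -hroot
  · rw [← Finset.sum_filter, ← neighborFinset_eq_filter, Finset.sum_const,
      card_neighborFinset_eq_degree, cyclesUnion_degree (hl i), nsmul_eq_mul]
    push_cast
    field_simp
    ring
  · field_simp
    ring

theorem root_eigenvector (t s n : ℕ) (ht : 1 ≤ t) (hs : 1 ≤ s)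
    (l : Fin t → ℕ) (hl : ∀ i, 3 ≤ l i) (hn : n = 1 + (∑ i, l i) + s)
    (r : ℝ) (hr1 : r ≠ 1) (hr5 : r ≠ 5)
    (hroot : r ^ 3 - (n + 5) * r ^ 2 + 5 * n * r - 4 * ((n : ℝ) - s - 1) = 0) :
    (signlessLaplacian (joinG (⊥ : SimpleGraph Unit)
        (sumG (cyclesUnion t l) (⊥ : SimpleGraph (Fin s))))).mulVec
      (Sum.elim (fun _ => 1)
        (Sum.elim (fun _ => 1 / (r - 5)) (fun _ => 1 / (r - 1)))) =
    r • (Sum.elim (fun _ => (1 : ℝ))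
        (Sum.elim (fun _ => 1 / (r - 5)) (fun _ => 1 / (r - 1)))) :=
  root_eigenvector_general t s n l hl hn r hr1 hr5 hroot
end

section
/- The graphs K_1 ∨ (C_3 ∪ s K_1) and K_1 ∨ (K_{1,3} ∪ (s−1) K_1), for any s ≥ 1, are non-isomorphic graphs on n = s + 4 vertices with equal signless Laplacian characteristic polynomials. -/
open SimpleGraph Matrix Finset
attribute [local instance] Classical.propDecidable
set_option linter.unnecessarySimpa false

/-! Both graphs are cones `K₁ ∨ (H ∪ tK₁)`, written `joinG (⊥ : SimpleGraph Unit) (sumG H ⊥)`.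
Write `φ G` for the characteristic polynomial of `Q(G)` and `ψ H = det ((X - 1) • 1 - Q(H))`.
The `t` pendant vertices form a block `(X - 1) • 1` of the characteristic matrix; its Schur
complement differs from `(X - 1)` times the characteristic matrix of `K₁ ∨ H` only at the apex,
which gives `(X - 1) φ (K₁ ∨ (H ∪ tK₁)) = (X - 1)^t ((X - 1) φ (K₁ ∨ H) - t X ψ H)`.
For `H = C₃` and `H = K₁,₃` the four polynomials are
`φ (K₁ ∨ C₃) = (X - 2)³ (X - 6)`, `ψ C₃ = (X - 2)² (X - 5)`,
`φ (K₁ ∨ K₁,₃) = (X - 2)² (X - 3) (X² - 7X + 4)`, `ψ K₁,₃ = (X - 1) (X - 2)² (X - 5)`,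
and the extra factor `X - 1` of `ψ K₁,₃` absorbs the shift from `s` to `s - 1` pendant vertices.
They are computed with the matrices `u • 1 - p • Q(H) - q • J` (`J` all ones), a family that is
closed under taking the Schur complement at the apex of a cone.
The graphs are not isomorphic since only the second one has a vertex of degree `2`. -/

open Polynomial

section GraphMatrices

variable {α β : Type*} (G : SimpleGraph α) (H : SimpleGraph β)

@[simp] theorem joinG_adj_inl_inl (a b : α) : (joinG G H).Adj (.inl a) (.inl b) ↔ G.Adj a b :=
  .rfl
@[simp] theorem joinG_adj_inr_inr (a b : β) : (joinG G H).Adj (.inr a) (.inr b) ↔ H.Adj a b :=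
  .rfl
@[simp] theorem joinG_adj_inl_inr (a : α) (b : β) : (joinG G H).Adj (.inl a) (.inr b) := trivial
@[simp] theorem joinG_adj_inr_inl (a : β) (b : α) : (joinG G H).Adj (.inr a) (.inl b) := trivial
@[simp] theorem sumG_adj_inl_inl (a b : α) : (sumG G H).Adj (.inl a) (.inl b) ↔ G.Adj a b :=
  .rfl
@[simp] theorem sumG_adj_inr_inr (a b : β) : (sumG G H).Adj (.inr a) (.inr b) ↔ H.Adj a b :=
  .rfl
@[simp] theorem sumG_not_adj_inl_inr (a : α) (b : β) : ¬ (sumG G H).Adj (.inl a) (.inr b) := id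
@[simp] theorem sumG_not_adj_inr_inl (a : β) (b : α) : ¬ (sumG G H).Adj (.inr a) (.inl b) := id

theorem completeBipartiteGraph_eq_joinG : completeBipartiteGraph α β = joinG ⊥ ⊥ := by
  ext (a | a) (b | b) <;> simp

variable [Fintype α] [Fintype β]

theorem degree_joinG_inl (a : α) :
    (joinG G H).degree (.inl a) = G.degree a + Fintype.card β := by
  have : (joinG G H).neighborFinset (.inl a) = (G.neighborFinset a).disjSum univ := by
    ext (b | b) <;> simp
  rw [← card_neighborFinset_eq_degree, this, card_disjSum, card_univ,
    card_neighborFinset_eq_degree]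

theorem degree_joinG_inr (b : β) :
    (joinG G H).degree (.inr b) = H.degree b + Fintype.card α := by
  have : (joinG G H).neighborFinset (.inr b) = univ.disjSum (H.neighborFinset b) := by
    ext (a | a) <;> simp
  rw [← card_neighborFinset_eq_degree, this, card_disjSum, card_univ, add_comm,
    card_neighborFinset_eq_degree]

theorem degree_sumG_inl (a : α) : (sumG G H).degree (.inl a) = G.degree a := by
  have : (sumG G H).neighborFinset (.inl a) = (G.neighborFinset a).disjSum ∅ := by
    ext (b | b) <;> simp
  rw [← card_neighborFinset_eq_degree, this, card_disjSum, card_empty, add_zero,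
    card_neighborFinset_eq_degree]

theorem degree_sumG_inr (b : β) : (sumG G H).degree (.inr b) = H.degree b := by
  have : (sumG G H).neighborFinset (.inr b) = (∅ : Finset α).disjSum (H.neighborFinset b) := by
    ext (a | a) <;> simp
  rw [← card_neighborFinset_eq_degree, this, card_disjSum, card_empty, zero_add,
    card_neighborFinset_eq_degree]

theorem signlessLaplacian_apply (v w : α) :
    signlessLaplacian G v w = if v = w then (G.degree v : ℝ) else if G.Adj v w then 1 else 0 := by
  by_cases h : v = w
  · subst h
    simp [signlessLaplacian]
  · simp [signlessLaplacian, h, adjMatrix_apply]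

theorem signlessLaplacian_bot : signlessLaplacian (⊥ : SimpleGraph α) = 0 := by
  ext a b
  simp [signlessLaplacian_apply]

theorem signlessLaplacian_joinG : signlessLaplacian (joinG G H) =
    fromBlocks (signlessLaplacian G + (Fintype.card β : ℝ) • 1) (of fun _ _ => 1)
      (of fun _ _ => 1) (signlessLaplacian H + (Fintype.card α : ℝ) • 1) := by
  ext (a | a) (b | b) <;>
    simp only [signlessLaplacian_apply, degree_joinG_inl, degree_joinG_inr, fromBlocks_apply₁₁,
      fromBlocks_apply₁₂, fromBlocks_apply₂₁, fromBlocks_apply₂₂, Matrix.add_apply,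
      Matrix.smul_apply, one_apply, of_apply, Sum.inl.injEq, Sum.inr.injEq, reduceCtorEq,
      joinG_adj_inl_inl, joinG_adj_inr_inr, joinG_adj_inl_inr, joinG_adj_inr_inl] <;>
    split_ifs <;> simp_all

theorem signlessLaplacian_sumG : signlessLaplacian (sumG G H) =
    fromBlocks (signlessLaplacian G) 0 0 (signlessLaplacian H) := by
  ext (a | a) (b | b) <;> simp [signlessLaplacian_apply, degree_sumG_inl, degree_sumG_inr]

end GraphMatrices

theorem signlessLaplacian_cycleGraph_three :
    signlessLaplacian (cycleGraph 3) = 1 + of fun _ _ => 1 := by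
  refine Matrix.ext fun i j => ?_
  rw [signlessLaplacian_apply]
  by_cases h : i = j
  · subst h
    have hdeg : ((cycleGraph 3).degree i : ℝ) = 2 := by
      exact_mod_cast cycleGraph_degree_three_le
    simp only [if_pos, Matrix.add_apply, one_apply_eq, of_apply, one_add_one_eq_two]
    convert hdeg
  · simp [h, one_apply, cycleGraph_three_eq_top]

section Determinants

variable {R : Type*} [CommRing R] {m n : Type*} [Fintype m] [Fintype n] [DecidableEq m]
  [DecidableEq n]

theorem det_fromBlocks_smul_one₁₁ (d : R) (B : Matrix m n R) (C : Matrix n m R)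
    (D : Matrix n n R) :
    det (fromBlocks (d • 1) B C D) * d ^ Fintype.card n =
      d ^ Fintype.card m * det (d • D - C * B) := by
  have h : fromBlocks (d • 1) B C D * fromBlocks 1 (-B) 0 (d • 1) =
      fromBlocks (d • 1) 0 C (d • D - C * B) := by
    rw [fromBlocks_multiply]
    congr 1 <;> simp [sub_eq_neg_add]
  simpa only [det_mul, det_fromBlocks_zero₂₁, det_fromBlocks_zero₁₂, det_smul, det_one, one_mul,
    mul_one] using congrArg det h

theorem det_fromBlocks_sub_smul_one₁₁ (A : Matrix Unit Unit R) (c : R) (B : Matrix Unit n R)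
    (C : Matrix n Unit R) (D : Matrix n n R) :
    det (fromBlocks (A - c • 1) B C D) = det (fromBlocks A B C D) - c * det D := by
  set M := fromBlocks A B C D
  have hrow : fromBlocks (A - c • 1) B C D =
      updateRow M (.inl ()) (M (.inl ()) + (-c) • Pi.single (.inl ()) 1) := by
    ext (i | i) (j | j) <;> simp [M, updateRow_apply, one_apply, sub_eq_add_neg]
  have hsingle : updateRow M (.inl ()) (Pi.single (.inl ()) 1) = fromBlocks 1 0 C D := by
    ext (i | i) (j | j) <;> simp [M, updateRow_apply, one_apply]
  rw [hrow, det_updateRow_add, det_updateRow_smul, hsingle, updateRow_eq_self,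
    det_fromBlocks_zero₁₂, det_one, one_mul, neg_mul, ← sub_eq_add_neg]

theorem det_smul_one_sub_smul_allOnes_fin_three (a b : R) :
    det (a • 1 - b • of fun _ _ => 1 : Matrix (Fin 3) (Fin 3) R) = a ^ 2 * (a - 3 * b) := by
  rw [det_fin_three]
  simp [one_apply]
  ring

end Determinants

theorem X_sub_ofNat_ne_zero {R : Type*} [Ring R] [Nontrivial R] (n : ℕ) [n.AtLeastTwo] :
    (X - ofNat(n) : R[X]) ≠ 0 := by
  simpa only [C_ofNat] using X_sub_C_ne_zero (ofNat(n) : R)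

noncomputable def pencil {V : Type*} [Fintype V] [DecidableEq V] (G : SimpleGraph V)
    (u p q : ℝ[X]) : Matrix V V ℝ[X] :=
  u • 1 - p • (signlessLaplacian G).map C - q • of fun _ _ => 1

section Pencil

variable {W : Type*} [Fintype W] [DecidableEq W] (H : SimpleGraph W)

theorem charpoly_signlessLaplacian_eq_det_pencil :
    (signlessLaplacian H).charpoly = det (pencil H X 1 0) := by
  rw [charpoly, charmatrix, pencil, one_smul, zero_smul, sub_zero, smul_one_eq_diagonal,
    scalar_apply, RingHom.mapMatrix_apply]

theorem pencil_bot (u p q : ℝ[X]) :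
    pencil (⊥ : SimpleGraph W) u p q = u • 1 - q • of fun _ _ => 1 := by
  simp [pencil, signlessLaplacian_bot]

theorem pencil_cone (u p q : ℝ[X]) :
    pencil (joinG (⊥ : SimpleGraph Unit) H) u p q =
      fromBlocks ((u - p * Fintype.card W - q) • 1) (-(p + q) • of fun _ _ => 1)
        (-(p + q) • of fun _ _ => 1) (pencil H (u - p) p q) := by
  refine Matrix.ext fun i j => ?_
  rcases i with i | i <;> rcases j with j | j <;>
    simp [pencil, signlessLaplacian_joinG, signlessLaplacian_bot, one_apply] <;>
    (try split_ifs) <;> ring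

theorem det_pencil_cone_mul_pow (u p q a : ℝ[X]) (ha : a = u - p * Fintype.card W - q) :
    det (pencil (joinG (⊥ : SimpleGraph Unit) H) u p q) * a ^ Fintype.card W =
      a * det (pencil H (a * (u - p)) (a * p) (a * q + (p + q) ^ 2)) := by
  rw [pencil_cone, ← ha, det_fromBlocks_smul_one₁₁, Fintype.card_unit, pow_one]
  congr 2
  refine Matrix.ext fun i j => ?_
  simp [pencil, mul_apply]
  ring

variable (T : Type*) [Fintype T] [DecidableEq T]

theorem pencil_cone_sumG_bot_submatrix :
    (pencil (joinG (⊥ : SimpleGraph Unit) (sumG H (⊥ : SimpleGraph T))) X 1 0).submatrix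
        ((Equiv.sumComm _ _).symm.trans (Equiv.sumAssoc _ _ _))
        ((Equiv.sumComm _ _).symm.trans (Equiv.sumAssoc _ _ _)) =
      fromBlocks ((X - 1 : ℝ[X]) • 1) (fromCols (-of fun _ _ => 1) 0)
        (fromRows (-of fun _ _ => 1) 0)
        (fromBlocks ((X - ((Fintype.card W + Fintype.card T : ℕ) : ℝ[X])) • 1) (-of fun _ _ => 1)
          (-of fun _ _ => 1) (pencil H (X - 1) 1 0)) := by
  refine Matrix.ext fun i j => ?_
  rcases i with i | i | i <;> rcases j with j | j | j <;>
    simp [pencil, signlessLaplacian_joinG, signlessLaplacian_sumG, signlessLaplacian_bot,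
      one_apply] <;>
    (try split_ifs) <;> ring

theorem charpoly_signlessLaplacian_cone_sumG_bot :
    (X - 1) *
        (signlessLaplacian (joinG (⊥ : SimpleGraph Unit) (sumG H (⊥ : SimpleGraph T)))).charpoly =
      (X - 1) ^ Fintype.card T *
        ((X - 1) * (signlessLaplacian (joinG (⊥ : SimpleGraph Unit) H)).charpoly -
          (Fintype.card T : ℝ[X]) * X * det (pencil H (X - 1) 1 0)) := by
  have hX : (X - 1 : ℝ[X]) ≠ 0 := by simpa using X_sub_C_ne_zero (1 : ℝ)
  have hschur : (X - 1 : ℝ[X]) • fromBlocks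
      ((X - ((Fintype.card W + Fintype.card T : ℕ) : ℝ[X])) • (1 : Matrix Unit Unit _))
      (-of fun _ _ => 1) (-of fun _ _ => 1) (pencil H (X - 1) 1 0) -
        fromRows (-of fun (_ : Unit) (_ : T) => (1 : ℝ[X])) (0 : Matrix W T ℝ[X]) *
          fromCols (-of fun (_ : T) (_ : Unit) => (1 : ℝ[X])) (0 : Matrix T W ℝ[X]) =
      fromBlocks (((X - 1 : ℝ[X]) * (X - (Fintype.card W : ℝ[X]))) • 1 -
          ((Fintype.card T : ℝ[X]) * X) • (1 : Matrix Unit Unit _))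
        ((X - 1 : ℝ[X]) • -of fun _ _ => 1) ((X - 1 : ℝ[X]) • -of fun _ _ => 1)
        ((X - 1 : ℝ[X]) • pencil H (X - 1) 1 0) := by
    rw [fromRows_mul_fromCols, fromBlocks_smul]
    refine Matrix.ext fun i j => ?_
    rcases i with i | i <;> rcases j with j | j <;> simp [mul_apply]
    ring
  have hcone : fromBlocks
      (((X - 1 : ℝ[X]) * (X - (Fintype.card W : ℝ[X]))) • (1 : Matrix Unit Unit _))
      ((X - 1 : ℝ[X]) • -of fun _ _ => 1) ((X - 1 : ℝ[X]) • -of fun _ _ => 1)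
      ((X - 1 : ℝ[X]) • pencil H (X - 1) 1 0) =
      (X - 1 : ℝ[X]) • pencil (joinG (⊥ : SimpleGraph Unit) H) X 1 0 := by
    rw [pencil_cone, fromBlocks_smul]
    simp [smul_smul]
  apply mul_left_cancel₀ (pow_ne_zero (Fintype.card W) hX)
  calc (X - 1 : ℝ[X]) ^ Fintype.card W * ((X - 1) * _)
      = det ((pencil (joinG (⊥ : SimpleGraph Unit) (sumG H (⊥ : SimpleGraph T))) X 1 0).submatrix
        ((Equiv.sumComm _ _).symm.trans (Equiv.sumAssoc _ _ _))
        ((Equiv.sumComm _ _).symm.trans (Equiv.sumAssoc _ _ _))) *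
          (X - 1) ^ Fintype.card (Unit ⊕ W) := by
        rw [det_submatrix_equiv_self, charpoly_signlessLaplacian_eq_det_pencil, Fintype.card_sum,
          Fintype.card_unit]
        ring
    _ = (X - 1) ^ Fintype.card T *
        (det ((X - 1 : ℝ[X]) • pencil (joinG (⊥ : SimpleGraph Unit) H) X 1 0) -
          (Fintype.card T : ℝ[X]) * X * det ((X - 1 : ℝ[X]) • pencil H (X - 1) 1 0)) := by
        rw [pencil_cone_sumG_bot_submatrix, det_fromBlocks_smul_one₁₁, hschur,
          det_fromBlocks_sub_smul_one₁₁, hcone]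
    _ = _ := by
        rw [det_smul, det_smul, Fintype.card_sum, Fintype.card_unit,
          ← charpoly_signlessLaplacian_eq_det_pencil]
        ring

end Pencil

theorem det_pencil_cycleGraph_three (u p q : ℝ[X]) :
    det (pencil (cycleGraph 3) u p q) = (u - p) ^ 2 * (u - p - 3 * (p + q)) := by
  rw [← det_smul_one_sub_smul_allOnes_fin_three]
  congr 1
  refine Matrix.ext fun i j => ?_
  simp [pencil, signlessLaplacian_cycleGraph_three, one_apply]
  split_ifs <;> ring

theorem det_pencil_completeBipartiteGraph_unit_three (u p q a : ℝ[X]) (ha : a = u - p * 3 - q)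
    (ha₀ : a ≠ 0) :
    det (pencil (completeBipartiteGraph Unit (Fin 3)) u p q) =
      (u - p) ^ 2 * (a * (u - p) - 3 * (a * q + (p + q) ^ 2)) := by
  have h := det_pencil_cone_mul_pow (⊥ : SimpleGraph (Fin 3)) u p q a (by simpa using ha)
  rw [pencil_bot, det_smul_one_sub_smul_allOnes_fin_three, Fintype.card_fin,
    ← completeBipartiteGraph_eq_joinG] at h
  apply mul_right_cancel₀ (pow_ne_zero 3 ha₀)
  linear_combination h

theorem charpoly_signlessLaplacian_cone_cycleGraph_three :
    (signlessLaplacian (joinG (⊥ : SimpleGraph Unit) (cycleGraph 3))).charpoly =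
      (X - 2) ^ 3 * (X - 6) := by
  have h := det_pencil_cone_mul_pow (cycleGraph 3) X 1 0 (X - 3) (by simp)
  rw [det_pencil_cycleGraph_three, Fintype.card_fin] at h
  rw [charpoly_signlessLaplacian_eq_det_pencil]
  apply mul_right_cancel₀ (pow_ne_zero 3 (X_sub_ofNat_ne_zero 3))
  linear_combination h

theorem charpoly_signlessLaplacian_cone_completeBipartiteGraph_unit_three :
    (signlessLaplacian
        (joinG (⊥ : SimpleGraph Unit) (completeBipartiteGraph Unit (Fin 3)))).charpoly =
      (X - 2) ^ 2 * (X - 3) * (X ^ 2 - 7 * X + 4) := by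
  have ha₀ : ((X - 3) * (X - 5) : ℝ[X]) ≠ 0 :=
    mul_ne_zero (X_sub_ofNat_ne_zero 3) (X_sub_ofNat_ne_zero 5)
  have h := det_pencil_cone_mul_pow (completeBipartiteGraph Unit (Fin 3)) X 1 0 (X - 4)
    (by simp)
  rw [det_pencil_completeBipartiteGraph_unit_three _ _ _ _ (by ring) ha₀, Fintype.card_sum,
    Fintype.card_unit, Fintype.card_fin] at h
  rw [charpoly_signlessLaplacian_eq_det_pencil]
  apply mul_right_cancel₀ (pow_ne_zero 4 (X_sub_ofNat_ne_zero 4))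
  linear_combination h

theorem not_nonempty_iso_cone_sumG_cycleGraph_three_completeBipartiteGraph
    (S T : Type*) [Fintype S] [Fintype T] :
    ¬ Nonempty (joinG (⊥ : SimpleGraph Unit) (sumG (cycleGraph 3) (⊥ : SimpleGraph S)) ≃g
      joinG (⊥ : SimpleGraph Unit)
        (sumG (completeBipartiteGraph Unit (Fin 3)) (⊥ : SimpleGraph T))) := by
  rintro ⟨f⟩
  have hleaf : (joinG (⊥ : SimpleGraph Unit)
      (sumG (completeBipartiteGraph Unit (Fin 3)) (⊥ : SimpleGraph T))).degree
        (.inr (.inl (.inr 0))) = 2 := by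
    rw [degree_joinG_inr, degree_sumG_inl, completeBipartiteGraph_eq_joinG, degree_joinG_inr]
    simp
  have h := f.symm.degree_eq (.inr (.inl (.inr 0)))
  rw [hleaf] at h
  generalize f.symm (.inr (.inl (.inr 0))) = v at h
  rcases v with _ | a | b
  · rw [degree_joinG_inl] at h
    simp at h
    omega
  · rw [degree_joinG_inr, degree_sumG_inl] at h
    have h' : (cycleGraph 3).degree a + Fintype.card Unit = 2 := by convert h
    rw [cycleGraph_degree_three_le, Fintype.card_unit] at h'
    omega
  · rw [degree_joinG_inr, degree_sumG_inr] at h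
    simp at h

theorem cospectral_mates_basic (s : ℕ) (hs : 1 ≤ s) :
    let G1 := joinG (⊥ : SimpleGraph Unit)
      (sumG (cycleGraph 3) (⊥ : SimpleGraph (Fin s)))
    let G2 := joinG (⊥ : SimpleGraph Unit)
      (sumG (completeBipartiteGraph Unit (Fin 3)) (⊥ : SimpleGraph (Fin (s - 1))))
    ¬ Nonempty (G1 ≃g G2) ∧
      (signlessLaplacian G1).charpoly = (signlessLaplacian G2).charpoly := by
  dsimp only
  refine ⟨not_nonempty_iso_cone_sumG_cycleGraph_three_completeBipartiteGraph _ _, ?_⟩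
  obtain ⟨k, rfl⟩ := Nat.exists_eq_add_of_le' hs
  have h1 := charpoly_signlessLaplacian_cone_sumG_bot (cycleGraph 3) (Fin (k + 1))
  have h2 := charpoly_signlessLaplacian_cone_sumG_bot (completeBipartiteGraph Unit (Fin 3))
    (Fin (k + 1 - 1))
  rw [charpoly_signlessLaplacian_cone_cycleGraph_three, det_pencil_cycleGraph_three,
    Fintype.card_fin] at h1
  rw [charpoly_signlessLaplacian_cone_completeBipartiteGraph_unit_three,
    det_pencil_completeBipartiteGraph_unit_three _ _ _ (X - 4) (by ring) (X_sub_ofNat_ne_zero 4),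
    Fintype.card_fin, Nat.add_sub_cancel] at h2
  apply mul_left_cancel₀ (show (X - 1 : ℝ[X]) ≠ 0 by simpa using X_sub_C_ne_zero (1 : ℝ))
  rw [h1, h2]
  push_cast
  ring
end
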